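/- arXiv:1707.03317 — 4 statements merged into one kernel-verified Lean document; each statement's English description precedes it below -/
import Mathlib

section
/- Let x = [0, \overline{c_1, ..., c_n}] be a periodic continued fraction as above, with rational part a (so x = a + √b). Then the fractional part {2a} depends only on c_1, ..., c_{n-1} and not on c_n; specifically, 2a + c_n = (p_{n-1} - q_{n-2})/q_{n-1}, a quantity determined by c_1, ..., c_{n-1} alone. -/
/-!
Clearing denominators in `x = (pₙ + pₙ₋₁ x)/(qₙ + qₙ₋₁ x)` shows that `x` is a root of
`qₙ₋₁ X² + (qₙ - pₙ₋₁) X - pₙ`. Expanding at `x = a + √b`, the coefficient `2a qₙ₋₁ + qₙ - pₙ₋₁`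
of the irrational `√b` must vanish (`2a` is the sum of `x` and its conjugate). Substituting
`qₙ = cₙ qₙ₋₁ + qₙ₋₂` gives the formula for `2a + cₙ`, whose right-hand side only involves
convergents of `[0; c₁, …, cₙ₋₁]`. Since `cₙ` is an integer, it does not affect the fractional
part of `2a`.
-/

lemma Irrational.eq_zero_of_ratCast_add_mul_eq_zero {s : ℝ} (hs : Irrational s) {u v : ℚ}
    (h : (u : ℝ) + v * s = 0) : v = 0 := by
  by_contra hv
  exact not_irrational_zero (h ▸ (hs.ratCast_mul hv).ratCast_add u)

-- `2aα + β` is the coefficient of the irrational `s` in the expanded quadratic.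
lemma two_mul_mul_add_eq_zero_of_quadratic_root {α β γ a b : ℚ} {s : ℝ}
    (hs : s ^ 2 = (b : ℝ)) (hirr : Irrational ((a : ℝ) + s))
    (hroot : (α : ℝ) * (a + s) ^ 2 + β * (a + s) + γ = 0) :
    2 * a * α + β = 0 := by
  have hsirr : Irrational s := by simpa using hirr.sub_ratCast a
  refine hsirr.eq_zero_of_ratCast_add_mul_eq_zero (u := α * a ^ 2 + α * b + β * a + γ) ?_
  push_cast
  linear_combination hroot - (α : ℝ) * hs

section Convergents

variable {c q : ℕ → ℤ}

lemma convergent_denom_pos (hc : ∀ k, 1 ≤ k → 1 ≤ c k) (hq0 : q 0 = 0) (hq1 : q 1 = 1)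
    (hq : ∀ k, q (k + 2) = c (k + 1) * q (k + 1) + q k) (k : ℕ) :
    0 ≤ q k ∧ 1 ≤ q (k + 1) := by
  induction k with
  | zero => simp [hq0, hq1]
  | succ k ih =>
    refine ⟨zero_le_one.trans ih.2, ?_⟩
    rw [hq k]
    nlinarith [hc (k + 1) (by omega)]

lemma convergent_eq_of_digits_eq {c' u v : ℕ → ℤ} {N : ℕ}
    (hagree : ∀ k, 1 ≤ k → k < N → c k = c' k) (h0 : u 0 = v 0) (h1 : u 1 = v 1)
    (hu : ∀ k, u (k + 2) = c (k + 1) * u (k + 1) + u k)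
    (hv : ∀ k, v (k + 2) = c' (k + 1) * v (k + 1) + v k) :
    ∀ k ≤ N, u k = v k := by
  have step : ∀ k, k + 1 ≤ N → u k = v k ∧ u (k + 1) = v (k + 1) := by
    intro k
    induction k with
    | zero => exact fun _ => ⟨h0, h1⟩
    | succ k ih =>
      intro hk
      obtain ⟨hk0, hk1⟩ := ih (by omega)
      refine ⟨hk1, ?_⟩
      rw [hu, hv, hagree (k + 1) (by omega) (by omega), hk0, hk1]
  intro k hk
  cases k with
  | zero => exact h0
  | succ k => exact (step k hk).2

-- Index `k + 1` is subscript `k`: `p n` is `pₙ₋₁` and `q 0` is `q₋₁`.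
lemma two_mul_ratPart_add_digit {p : ℕ → ℤ} {n : ℕ} (hn : 1 ≤ n)
    (hc : ∀ k, 1 ≤ k → 1 ≤ c k) (hq0 : q 0 = 0) (hq1 : q 1 = 1)
    (hq : ∀ k, q (k + 2) = c (k + 1) * q (k + 1) + q k)
    {x : ℝ} (hx0 : 0 < x) (hxirr : Irrational x)
    (hrel : x = ((p (n + 1) : ℝ) + (p n : ℝ) * x) / ((q (n + 1) : ℝ) + (q n : ℝ) * x))
    {a b : ℚ} {s : ℝ} (hs : s ^ 2 = (b : ℝ)) (hxas : x = (a : ℝ) + s) :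
    2 * a + (c n : ℚ) = ((p n : ℚ) - (q (n - 1) : ℚ)) / (q n : ℚ) := by
  obtain ⟨m, rfl⟩ : ∃ m, n = m + 1 := ⟨n - 1, by omega⟩
  obtain ⟨-, hqm1⟩ := convergent_denom_pos hc hq0 hq1 hq m
  obtain ⟨-, hqn1⟩ := convergent_denom_pos hc hq0 hq1 hq (m + 1)
  have hden : (0 : ℝ) < (q (m + 2) : ℝ) + (q (m + 1) : ℝ) * x := by
    have : (1 : ℝ) ≤ q (m + 2) := by exact_mod_cast hqn1
    have : (1 : ℝ) ≤ q (m + 1) := by exact_mod_cast hqm1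
    nlinarith
  rw [show m + 1 + 1 = m + 2 from rfl, eq_div_iff hden.ne'] at hrel
  have hsum : 2 * a * (q (m + 1) : ℚ) + ((q (m + 2) : ℚ) - p (m + 1)) = 0 := by
    refine two_mul_mul_add_eq_zero_of_quadratic_root (γ := -(p (m + 2) : ℚ)) hs
      (hxas ▸ hxirr) ?_
    push_cast
    rw [← hxas]
    linear_combination hrel
  have hqrec : (q (m + 2) : ℚ) = c (m + 1) * q (m + 1) + q m := by exact_mod_cast hq m
  have hqne : (q (m + 1) : ℚ) ≠ 0 := by exact_mod_cast (by omega : q (m + 1) ≠ 0)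
  rw [Nat.add_sub_cancel, eq_div_iff hqne]
  linear_combination hsum - hqrec

end Convergents

theorem stmt_7_general (n : ℕ) (hn : 1 ≤ n) (c p q c' p' q' : ℕ → ℤ)
    (hc : ∀ k, 1 ≤ k → 1 ≤ c k)
    (hp0 : p 0 = 1) (hp1 : p 1 = 0)
    (hq0 : q 0 = 0) (hq1 : q 1 = 1)
    (hp : ∀ k, p (k + 2) = c (k + 1) * p (k + 1) + p k)
    (hq : ∀ k, q (k + 2) = c (k + 1) * q (k + 1) + q k)
    (hc' : ∀ k, 1 ≤ k → 1 ≤ c' k)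
    (hp0' : p' 0 = 1) (hp1' : p' 1 = 0)
    (hq0' : q' 0 = 0) (hq1' : q' 1 = 1)
    (hp' : ∀ k, p' (k + 2) = c' (k + 1) * p' (k + 1) + p' k)
    (hq' : ∀ k, q' (k + 2) = c' (k + 1) * q' (k + 1) + q' k)
    (hagree : ∀ k, 1 ≤ k → k ≤ n - 1 → c k = c' k)
    (x : ℝ) (hx0 : 0 < x) (hxirr : Irrational x)
    (hrel : x = ((p (n + 1) : ℝ) + (p n : ℝ) * x) / ((q (n + 1) : ℝ) + (q n : ℝ) * x))
    (a b : ℚ)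
    (s : ℝ) (hs : s ^ 2 = (b : ℝ)) (hxas : x = (a : ℝ) + s)
    (x' : ℝ) (hx0' : 0 < x') (hxirr' : Irrational x')
    (hrel' : x' = ((p' (n + 1) : ℝ) + (p' n : ℝ) * x') / ((q' (n + 1) : ℝ) + (q' n : ℝ) * x'))
    (a' b' : ℚ)
    (s' : ℝ) (hs' : s' ^ 2 = (b' : ℝ)) (hxas' : x' = (a' : ℝ) + s') :
    2 * a + (c n : ℚ) = ((p n : ℚ) - (q (n - 1) : ℚ)) / (q n : ℚ) ∧
      Int.fract (2 * a) = Int.fract (2 * a') := by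
  have hformula := two_mul_ratPart_add_digit hn hc hq0 hq1 hq hx0 hxirr hrel hs hxas
  have hformula' := two_mul_ratPart_add_digit hn hc' hq0' hq1' hq' hx0' hxirr' hrel' hs' hxas'
  have hagree' : ∀ k, 1 ≤ k → k < n → c k = c' k := fun k hk hkn => hagree k hk (by omega)
  have hpn := convergent_eq_of_digits_eq hagree' (by rw [hp0, hp0']) (by rw [hp1, hp1']) hp hp'
  have hqn := convergent_eq_of_digits_eq hagree' (by rw [hq0, hq0']) (by rw [hq1, hq1']) hq hq'
  refine ⟨hformula, ?_⟩
  rw [eq_sub_of_add_eq hformula, eq_sub_of_add_eq hformula', hpn n le_rfl, hqn n le_rfl,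
    hqn (n - 1) (by omega), Int.fract_sub_intCast, Int.fract_sub_intCast]

/-- For `x = [0; \overline{c₁,…,cₙ}]` with rational part `a`, the fractional part of `2a`
depends only on `c₁,…,cₙ₋₁`: one has `2a + cₙ = (pₙ₋₁ - qₙ₋₂)/qₙ₋₁` (a quantity determined
by `c₁,…,cₙ₋₁` alone), and for any second such continued fraction whose digits agree with
the first at places `1,…,n-1`, the fractional parts of `2a` coincide.
(Index `k+1` = subscript `k`.) -/
theorem stmt_7 (n : ℕ) (hn : 1 ≤ n) (c p q c' p' q' : ℕ → ℤ)
    (hc0 : c 0 = 0) (hc : ∀ k, 1 ≤ k → 1 ≤ c k)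
    (hp0 : p 0 = 1) (hp1 : p 1 = 0)
    (hq0 : q 0 = 0) (hq1 : q 1 = 1)
    (hp : ∀ k, p (k + 2) = c (k + 1) * p (k + 1) + p k)
    (hq : ∀ k, q (k + 2) = c (k + 1) * q (k + 1) + q k)
    (hc0' : c' 0 = 0) (hc' : ∀ k, 1 ≤ k → 1 ≤ c' k)
    (hp0' : p' 0 = 1) (hp1' : p' 1 = 0)
    (hq0' : q' 0 = 0) (hq1' : q' 1 = 1)
    (hp' : ∀ k, p' (k + 2) = c' (k + 1) * p' (k + 1) + p' k)
    (hq' : ∀ k, q' (k + 2) = c' (k + 1) * q' (k + 1) + q' k)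
    (hagree : ∀ k, 1 ≤ k → k ≤ n - 1 → c k = c' k)
    (x : ℝ) (hx0 : 0 < x) (hx1 : x < 1) (hxirr : Irrational x)
    (hrel : x = ((p (n + 1) : ℝ) + (p n : ℝ) * x) / ((q (n + 1) : ℝ) + (q n : ℝ) * x))
    (a b : ℚ) (hb : 0 < b) (hbns : ¬ ∃ r : ℚ, r ^ 2 = b)
    (s : ℝ) (hs : s ^ 2 = (b : ℝ)) (hxas : x = (a : ℝ) + s)
    (x' : ℝ) (hx0' : 0 < x') (hx1' : x' < 1) (hxirr' : Irrational x')
    (hrel' : x' = ((p' (n + 1) : ℝ) + (p' n : ℝ) * x') / ((q' (n + 1) : ℝ) + (q' n : ℝ) * x'))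
    (a' b' : ℚ) (hb' : 0 < b') (hbns' : ¬ ∃ r : ℚ, r ^ 2 = b')
    (s' : ℝ) (hs' : s' ^ 2 = (b' : ℝ)) (hxas' : x' = (a' : ℝ) + s') :
    2 * a + (c n : ℚ) = ((p n : ℚ) - (q (n - 1) : ℚ)) / (q n : ℚ) ∧
      Int.fract (2 * a) = Int.fract (2 * a') :=
  stmt_7_general n hn c p q c' p' q' hc hp0 hp1 hq0 hq1 hp hq hc' hp0' hp1' hq0' hq1' hp' hq' hagree
    x hx0 hxirr hrel a b s hs hxas x' hx0' hxirr' hrel' a' b' s' hs' hxas'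
end

section
/- Let n ≥ 2 and let p_k, q_k be convergents of a continued fraction with positive integer digits c_1, ..., c_n and c_0 = 0. Then p_{n-1} = q_{n-2} if and only if p_{n-1}^2 ≡ (-1)^n (mod q_{n-1}). -/
/-!
Both `p` and `q` solve the recurrence `x (k + 2) = c (k + 1) * x (k + 1) + x k`, so their
Casoratian alternates in sign and `p n * q (n - 1) ≡ (-1)ⁿ (mod q n)`. If also `p n ^ 2 ≡ (-1)ⁿ`,
multiplying by `p n` and the unit `(-1)ⁿ` gives `p n ≡ q (n - 1)`. Positive digits give
`1 ≤ p n ≤ q n` and `1 ≤ q (n - 1) ≤ q n`, so this congruence is an equality.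
-/

def ContinuantRec {R : Type*} [Semiring R] (c x : ℕ → R) : Prop :=
  ∀ k, x (k + 2) = c (k + 1) * x (k + 1) + x k

namespace ContinuantRec

variable {R : Type*} {c x y : ℕ → R}

theorem comp_succ [Semiring R] (hx : ContinuantRec c x) :
    ContinuantRec (fun k ↦ c (k + 1)) (fun k ↦ x (k + 1)) :=
  fun k ↦ hx (k + 1)

theorem sub [Ring R] (hx : ContinuantRec c x) (hy : ContinuantRec c y) :
    ContinuantRec c (x - y) := by
  intro k
  simp only [Pi.sub_apply, hx k, hy k, mul_sub]
  abel

theorem casoratian [CommRing R] (hx : ContinuantRec c x) (hy : ContinuantRec c y) (k : ℕ) :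
    x (k + 1) * y k - x k * y (k + 1) = (-1) ^ k * (x 1 * y 0 - x 0 * y 1) := by
  induction k with
  | zero => ring
  | succ k ih =>
    rw [hx k, hy k, pow_succ, mul_comm _ (-1 : R), mul_assoc, ← ih]
    ring

variable [Semiring R] [PartialOrder R] [IsOrderedRing R]

theorem nonneg (hx : ContinuantRec c x) (hc : ∀ k, 0 ≤ c (k + 1)) (h0 : 0 ≤ x 0)
    (h1 : 0 ≤ x 1) (k : ℕ) : 0 ≤ x k := by
  induction k using Nat.twoStepInduction with
  | zero => exact h0
  | one => exact h1
  | more k ihk ihk1 =>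
    rw [hx k]
    exact add_nonneg (mul_nonneg (hc k) ihk1) ihk

theorem monotone_succ (hx : ContinuantRec c x) (hc : ∀ k, 1 ≤ c (k + 1)) (h0 : 0 ≤ x 0)
    (h1 : 0 ≤ x 1) : Monotone (fun k ↦ x (k + 1)) := by
  have hc0 : ∀ k, 0 ≤ c (k + 1) := fun k ↦ zero_le_one.trans (hc k)
  refine monotone_nat_of_le_succ fun k ↦ ?_
  calc x (k + 1) = 1 * x (k + 1) + 0 := by rw [one_mul, add_zero]
    _ ≤ c (k + 1) * x (k + 1) + x k := by
      gcongr
      · exact hx.nonneg hc0 h0 h1 _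
      · exact hc k
      · exact hx.nonneg hc0 h0 h1 k
    _ = x (k + 2) := (hx k).symm

end ContinuantRec

theorem Int.eq_iff_sq_modEq_of_mul_modEq {a b m e : ℤ} (he : IsUnit e)
    (hab : a * b ≡ e [ZMOD m]) (hlt : |b - a| < m) : a = b ↔ a ^ 2 ≡ e [ZMOD m] := by
  refine ⟨fun h ↦ by subst h; rwa [sq], fun ha ↦ ?_⟩
  have hmod : a ≡ b [ZMOD m] :=
    calc a = a * e * e := by rw [mul_assoc, Int.isUnit_mul_self he, mul_one]
      _ ≡ a * (a * b) * e [ZMOD m] := (hab.symm.mul_left a).mul_right e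
      _ = a ^ 2 * b * e := by ring
      _ ≡ e * b * e [ZMOD m] := (ha.mul_right b).mul_right e
      _ = b := by rw [mul_comm e b, mul_assoc, Int.isUnit_mul_self he, mul_one]
  linarith [Int.eq_zero_of_abs_lt_dvd hmod.dvd hlt]

/-- `p (k + 1)` and `q (k + 1)` are the paper's `p_k` and `q_k`. -/
theorem stmt_9_general (n : ℕ) (hn : 2 ≤ n) (c p q : ℕ → ℤ)
    (hc : ∀ k, 1 ≤ k → 1 ≤ c k)
    (hp0 : p 0 = 1) (hp1 : p 1 = 0)
    (hq0 : q 0 = 0) (hq1 : q 1 = 1)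
    (hp : ∀ k, p (k + 2) = c (k + 1) * p (k + 1) + p k)
    (hq : ∀ k, q (k + 2) = c (k + 1) * q (k + 1) + q k) :
    p n = q (n - 1) ↔ (p n) ^ 2 ≡ (-1) ^ n [ZMOD q n] := by
  obtain ⟨m, rfl⟩ : ∃ m, n = m + 2 := ⟨n - 2, by omega⟩
  have hc1 : ∀ k, 1 ≤ c (k + 1) := fun k ↦ hc (k + 1) k.succ_pos
  replace hp : ContinuantRec c p := hp
  replace hq : ContinuantRec c q := hq
  have hdet : p (m + 2) * q (m + 1) ≡ (-1) ^ (m + 2) [ZMOD q (m + 2)] := by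
    have := hp.casoratian hq (m + 1)
    rw [hp0, hp1, hq0, hq1] at this
    exact Int.modEq_iff_dvd.mpr ⟨-p (m + 1), by linear_combination -this⟩
  have hp_ge : 1 ≤ p (m + 2) := by
    have hp2 : p 2 = 1 := by simp [hp 0, hp0, hp1]
    exact hp2 ▸ hp.monotone_succ hc1 (by simp [hp0]) (by simp [hp1]) m.succ_pos
  have hq_mono := hq.monotone_succ hc1 (by simp [hq0]) (by simp [hq1])
  have hq_ge : 1 ≤ q (m + 1) := hq1 ▸ hq_mono (Nat.zero_le m)
  have hq_le : q (m + 1) ≤ q (m + 2) := hq_mono m.le_succ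
  -- `q - p` solves the recurrence, with `q 1 - p 1 = 1` and `q 2 - p 2 = c 1 - 1`.
  have hp_le : p (m + 2) ≤ q (m + 2) :=
    sub_nonneg.mp ((hq.sub hp).comp_succ.nonneg (fun k ↦ zero_le_one.trans (hc1 (k + 1)))
      (by simp [hp1, hq1]) (by simp [hp 0, hq 0, hp0, hp1, hq0, hq1, hc1 0]) (m + 1))
  refine Int.eq_iff_sq_modEq_of_mul_modEq (isUnit_neg_one.pow _) hdet ?_
  rw [show m + 2 - 1 = m + 1 from rfl, abs_lt]
  constructor <;> linarith

/-- For `n ≥ 2` and convergents of a continued fraction with `c₀ = 0` and positive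
integer digits (index `k+1` = subscript `k`): `pₙ₋₁ = qₙ₋₂` if and only if
`pₙ₋₁² ≡ (-1)ⁿ (mod qₙ₋₁)`. -/
theorem stmt_9 (n : ℕ) (hn : 2 ≤ n) (c p q : ℕ → ℤ)
    (hc0 : c 0 = 0) (hc : ∀ k, 1 ≤ k → 1 ≤ c k)
    (hp0 : p 0 = 1) (hp1 : p 1 = 0)
    (hq0 : q 0 = 0) (hq1 : q 1 = 1)
    (hp : ∀ k, p (k + 2) = c (k + 1) * p (k + 1) + p k)
    (hq : ∀ k, q (k + 2) = c (k + 1) * q (k + 1) + q k) :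
    p n = q (n - 1) ↔ (p n) ^ 2 ≡ (-1) ^ n [ZMOD q n] :=
  stmt_9_general n hn c p q hc hp0 hp1 hq0 hq1 hp hq
end

section
/- Let p_k, q_k be the convergents of [0, c_1, ..., c_n] with positive integer digits, n ≥ 1. Then p_{n-1}^2 ≡ (-1)^n (mod q_{n-1}) if and only if the sequence c_1, ..., c_{n-1} is symmetric, i.e., c_k = c_{n-k} for all 1 ≤ k ≤ n-1. -/
/-!
With `M = ∏ₖ !![cₖ, 1; 1, 0]` over the digits `c₁, …, cₙ₋₁` one has
`M = !![q n, q (n-1); p n, p (n-1)]` and `det M = ±1`. The determinant identity makes `p n` a unit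
modulo `q n` and turns the congruence into `q n ∣ q (n-1) - p n`; since the off-diagonal entries of
`M` differ by less than its corner entry, this means `M` is symmetric. Finally a product of such
matrices with positive digits is symmetric exactly when the digit word is a palindrome: writing
the word as `a :: t ++ [b]`, symmetry says `(a - b) E₀₀ = E₀₁ - E₁₀` for `E` the inner product,
and the same bound forces `a = b` and `E` symmetric.
-/

open Matrix

def contMat (a : ℤ) : Matrix (Fin 2) (Fin 2) ℤ := !![a, 1; 1, 0]

def contProd (l : List ℤ) : Matrix (Fin 2) (Fin 2) ℤ := (l.map contMat).prod

lemma contProd_nil : contProd [] = 1 := rfl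

lemma contProd_cons (a : ℤ) (l : List ℤ) : contProd (a :: l) = contMat a * contProd l := by
  simp [contProd]

lemma contProd_append (l l' : List ℤ) : contProd (l ++ l') = contProd l * contProd l' := by
  simp [contProd]

lemma contProd_singleton (a : ℤ) : contProd [a] = contMat a := by simp [contProd]

lemma contMat_mul (a : ℤ) (A : Matrix (Fin 2) (Fin 2) ℤ) :
    contMat a * A = !![a * A 0 0 + A 1 0, a * A 0 1 + A 1 1; A 0 0, A 0 1] := by
  ext i j; fin_cases i <;> fin_cases j <;> simp [contMat, mul_apply]

lemma mul_contMat (A : Matrix (Fin 2) (Fin 2) ℤ) (b : ℤ) :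
    A * contMat b = !![b * A 0 0 + A 0 1, A 0 0; b * A 1 0 + A 1 1, A 1 0] := by
  ext i j; fin_cases i <;> fin_cases j <;> simp [contMat, mul_apply, mul_comm]

lemma det_contProd (l : List ℤ) : (contProd l).det = (-1) ^ l.length := by
  induction l with
  | nil => simp [contProd_nil]
  | cons a l ih =>
    rw [contProd_cons, det_mul, ih, contMat, det_fin_two_of, List.length_cons, pow_succ']
    ring

def ContinuantBounds (E : Matrix (Fin 2) (Fin 2) ℤ) : Prop :=
  0 ≤ E 1 1 ∧ E 1 1 ≤ E 0 1 ∧ E 1 1 ≤ E 1 0 ∧ 1 ≤ E 0 1 ∧ 1 ≤ E 1 0 ∧ E 0 1 ≤ E 0 0 ∧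
    E 1 0 ≤ E 0 0

lemma continuantBounds_contMat {a : ℤ} (ha : 1 ≤ a) : ContinuantBounds (contMat a) := by
  simp [ContinuantBounds, contMat, ha]

lemma ContinuantBounds.contMat_mul {a : ℤ} {E : Matrix (Fin 2) (Fin 2) ℤ} (ha : 1 ≤ a)
    (hE : ContinuantBounds E) : ContinuantBounds (contMat a * E) := by
  obtain ⟨h₁, h₂, h₃, h₄, h₅, h₆, h₇⟩ := hE
  rw [_root_.contMat_mul]
  refine ⟨?_, ?_, ?_, ?_, ?_, ?_, ?_⟩ <;> simp <;> nlinarith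

lemma continuantBounds_contProd {l : List ℤ} (hl : l ≠ []) (hpos : ∀ x ∈ l, 1 ≤ x) :
    ContinuantBounds (contProd l) := by
  induction l with
  | nil => exact absurd rfl hl
  | cons a t ih =>
    have ha : 1 ≤ a := hpos a List.mem_cons_self
    rw [contProd_cons]
    rcases eq_or_ne t [] with rfl | ht
    · simpa [contProd_nil] using continuantBounds_contMat ha
    · exact (ih ht fun x hx => hpos x (List.mem_cons_of_mem a hx)).contMat_mul ha

lemma abs_contProd_sub_lt {l : List ℤ} (hpos : ∀ x ∈ l, 1 ≤ x) :
    |contProd l 0 1 - contProd l 1 0| < contProd l 0 0 := by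
  rcases eq_or_ne l [] with rfl | hl
  · simp [contProd_nil]
  · obtain ⟨-, -, -, h₄, h₅, h₆, h₇⟩ := continuantBounds_contProd hl hpos
    rw [abs_lt]
    constructor <;> linarith

lemma contProd_symm_iff {l : List ℤ} (hpos : ∀ x ∈ l, 1 ≤ x) :
    contProd l 0 1 = contProd l 1 0 ↔ l.reverse = l := by
  induction l using List.bidirectionalRec with
  | nil => simp [contProd_nil]
  | singleton a => simp [contProd_singleton, contMat]
  | cons_append a t b ih =>
    have htpos : ∀ x ∈ t, 1 ≤ x := fun x hx => hpos x (by simp [hx])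
    set E := contProd t
    have hE := abs_contProd_sub_lt htpos
    have h01 : contProd (a :: (t ++ [b])) 0 1 = a * E 0 0 + E 1 0 := by
      rw [contProd_cons, contProd_append, contProd_singleton, ← mul_assoc, contMat_mul,
        mul_contMat]
      rfl
    have h10 : contProd (a :: (t ++ [b])) 1 0 = b * E 0 0 + E 0 1 := by
      rw [contProd_cons, contProd_append, contProd_singleton, ← mul_assoc, contMat_mul,
        mul_contMat]
      rfl
    have hrev : (a :: (t ++ [b])).reverse = a :: (t ++ [b]) ↔ a = b ∧ t.reverse = t := by
      simp only [List.reverse_cons, List.reverse_append, List.reverse_nil, List.nil_append,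
        List.cons_append, List.cons.injEq]
      constructor
      · rintro ⟨rfl, h⟩
        exact ⟨rfl, List.append_cancel_right h⟩
      · rintro ⟨rfl, h⟩
        exact ⟨rfl, by rw [h]⟩
    rw [h01, h10, hrev, ← ih htpos]
    constructor
    · intro h
      have hdiff : E 0 1 - E 1 0 = 0 :=
        Int.eq_zero_of_abs_lt_dvd ⟨a - b, by linarith⟩ hE
      have hab : (a - b) * E 0 0 = 0 := by linarith
      have hE0 : E 0 0 ≠ 0 := (lt_of_le_of_lt (abs_nonneg _) hE).ne'
      exact ⟨by simpa [sub_eq_zero, hE0] using hab, by linarith⟩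
    · rintro ⟨rfl, h⟩
      rw [h]

lemma sq_modEq_neg_one_pow_iff {x y z u : ℤ} {m : ℕ} (hdet : x * u - y * z = (-1) ^ m)
    (hlt : |y - z| < x) : z ^ 2 ≡ (-1) ^ (m + 1) [ZMOD x] ↔ y = z := by
  have hunit : (-1 : ℤ) ^ m * (-1) ^ m = 1 := by rw [← mul_pow]; simp
  have hcop : IsCoprime x z :=
    ⟨(-1) ^ m * u, -((-1) ^ m * y), by linear_combination (-1) ^ m * hdet + hunit⟩
  have hsplit : (-1) ^ (m + 1) - z ^ 2 = z * (y - z) - x * u := by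
    rw [pow_succ]; linear_combination hdet
  rw [Int.modEq_iff_dvd, hsplit, dvd_sub_left (dvd_mul_right x u)]
  constructor
  · exact fun h => sub_eq_zero.1 (Int.eq_zero_of_abs_lt_dvd (hcop.dvd_of_dvd_mul_left h) hlt)
  · rintro rfl
    simp

lemma map_range'_reverse_eq_iff {α : Type*} (f : ℕ → α) (m : ℕ) :
    ((List.range' 1 m).map f).reverse = (List.range' 1 m).map f ↔
      ∀ k, 1 ≤ k → k ≤ m → f k = f (m + 1 - k) := by
  rw [← List.map_reverse, List.reverse_range', List.range'_eq_map_range, List.map_map,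
    List.map_map, List.map_inj_left]
  simp only [Function.comp_apply, List.mem_range]
  constructor
  · intro h k hk1 hkm
    have := h (k - 1) (by omega)
    rw [show 1 + (k - 1) = k by omega, show 1 + m - 1 - (k - 1) = m + 1 - k by omega] at this
    exact this.symm
  · intro h i hi
    rw [h (1 + i) (by omega) (by omega)]
    congr 1
    omega

lemma contProd_convergents (c p q : ℕ → ℤ) (hp0 : p 0 = 1) (hp1 : p 1 = 0)
    (hq0 : q 0 = 0) (hq1 : q 1 = 1)
    (hp : ∀ k, p (k + 2) = c (k + 1) * p (k + 1) + p k)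
    (hq : ∀ k, q (k + 2) = c (k + 1) * q (k + 1) + q k) (k : ℕ) :
    contProd ((List.range' 1 k).map c) = !![q (k + 1), q k; p (k + 1), p k] := by
  induction k with
  | zero => rw [hp0, hp1, hq0, hq1]; exact one_fin_two
  | succ k ih =>
    rw [List.range'_1_concat, List.map_append, contProd_append, ih, List.map_singleton,
      contProd_singleton, mul_contMat, hp k, hq k]
    simp [add_comm]

theorem stmt_10_general (n : ℕ) (c p q : ℕ → ℤ)
    (hc : ∀ k, 1 ≤ k → 1 ≤ c k)
    (hp0 : p 0 = 1) (hp1 : p 1 = 0)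
    (hq0 : q 0 = 0) (hq1 : q 1 = 1)
    (hp : ∀ k, p (k + 2) = c (k + 1) * p (k + 1) + p k)
    (hq : ∀ k, q (k + 2) = c (k + 1) * q (k + 1) + q k) :
    (p n) ^ 2 ≡ (-1) ^ n [ZMOD q n] ↔ ∀ k, 1 ≤ k → k ≤ n - 1 → c k = c (n - k) := by
  cases n with
  | zero => exact ⟨fun _ k hk hk' => by omega, fun _ => by rw [hp0]; rfl⟩
  | succ m =>
    have hpos : ∀ x ∈ (List.range' 1 m).map c, 1 ≤ x := by
      simp only [List.mem_map, List.mem_range'_1]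
      rintro _ ⟨k, ⟨hk, -⟩, rfl⟩
      exact hc k hk
    have hM := contProd_convergents c p q hp0 hp1 hq0 hq1 hp hq m
    have hdet := det_contProd ((List.range' 1 m).map c)
    have hlt := abs_contProd_sub_lt hpos
    have hsymm := contProd_symm_iff hpos
    rw [hM, det_fin_two_of, List.length_map, List.length_range'] at hdet
    rw [hM] at hlt hsymm
    rw [sq_modEq_neg_one_pow_iff hdet hlt, Nat.add_sub_cancel, ← map_range'_reverse_eq_iff]
    exact hsymm

/-- (Perron) For convergents of `[0; c₁,…,cₙ]` with positive integer digits, `n ≥ 1`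
(index `k+1` = subscript `k`): `pₙ₋₁² ≡ (-1)ⁿ (mod qₙ₋₁)` if and only if the sequence
`c₁,…,cₙ₋₁` is symmetric, i.e. `cₖ = c_{n-k}` for `1 ≤ k ≤ n-1`. -/
theorem stmt_10 (n : ℕ) (hn : 1 ≤ n) (c p q : ℕ → ℤ)
    (hc0 : c 0 = 0) (hc : ∀ k, 1 ≤ k → 1 ≤ c k)
    (hp0 : p 0 = 1) (hp1 : p 1 = 0)
    (hq0 : q 0 = 0) (hq1 : q 1 = 1)
    (hp : ∀ k, p (k + 2) = c (k + 1) * p (k + 1) + p k)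
    (hq : ∀ k, q (k + 2) = c (k + 1) * q (k + 1) + q k) :
    (p n) ^ 2 ≡ (-1) ^ n [ZMOD q n] ↔ ∀ k, 1 ≤ k → k ≤ n - 1 → c k = c (n - k) :=
  stmt_10_general n c p q hc hp0 hp1 hq0 hq1 hp hq
end

section
/- Let x = [0, \overline{c_1, ..., c_n}] with rational part a. The following are equivalent: (a) 2a ∈ ℤ; (b) 2a = -c_n; (c) the sequence c_1, ..., c_{n-1} is symmetric (c_k = c_{n-k} for 1 ≤ k ≤ n-1). -/
/-!
The fixed-point relation says that `x` is a root of `q_{n-1} X² + (q_n - p_{n-1}) X - p_n`, and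
since `√b` is irrational its coefficient in that equation must vanish:
`2a q_{n-1} = p_{n-1} - q_n`, i.e. `(2a + c_n) q_{n-1} = p_{n-1} - q_{n-2}`. As
`|p_{n-1} - q_{n-2}| < q_{n-1}`, the number `2a` is an integer iff `2a = -c_n` iff
`p_{n-1} = q_{n-2}`.

The product of the matrices `[[c_k, 1], [1, 0]]`, `k < n`, is `[[q_{n-1}, q_{n-2}], [p_{n-1}, p_{n-2}]]`.
Reversing the word `c_1, …, c_{n-1}` transposes this product, and a word of positive digits is
determined by its length and its product, so `p_{n-1} = q_{n-2}` iff the word is a palindrome.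
-/

open Matrix

def cfMatrix (l : List ℤ) : Matrix (Fin 2) (Fin 2) ℤ :=
  (l.map fun a => !![a, 1; 1, 0]).prod

@[simp]
lemma cfMatrix_nil : cfMatrix [] = 1 := rfl

lemma cfMatrix_cons (a : ℤ) (l : List ℤ) :
    cfMatrix (a :: l) = !![a, 1; 1, 0] * cfMatrix l := rfl

lemma cfMatrix_append_singleton (l : List ℤ) (a : ℤ) :
    cfMatrix (l ++ [a]) = cfMatrix l * !![a, 1; 1, 0] := by
  simp [cfMatrix]

lemma cfMatrix_reverse (l : List ℤ) : cfMatrix l.reverse = (cfMatrix l)ᵀ := by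
  simp only [cfMatrix, transpose_list_prod, List.map_map, List.map_reverse]
  congr 3
  funext a
  ext i j
  fin_cases i <;> fin_cases j <;> rfl

section Cons

variable (a : ℤ) (l : List ℤ)

@[simp]
lemma cfMatrix_cons_zero_zero : cfMatrix (a :: l) 0 0 = a * cfMatrix l 0 0 + cfMatrix l 1 0 := by
  simp [cfMatrix_cons, mul_apply, Fin.sum_univ_two]

@[simp]
lemma cfMatrix_cons_zero_one : cfMatrix (a :: l) 0 1 = a * cfMatrix l 0 1 + cfMatrix l 1 1 := by
  simp [cfMatrix_cons, mul_apply, Fin.sum_univ_two]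

@[simp]
lemma cfMatrix_cons_one_zero : cfMatrix (a :: l) 1 0 = cfMatrix l 0 0 := by
  simp [cfMatrix_cons, mul_apply, Fin.sum_univ_two]

@[simp]
lemma cfMatrix_cons_one_one : cfMatrix (a :: l) 1 1 = cfMatrix l 0 1 := by
  simp [cfMatrix_cons, mul_apply, Fin.sum_univ_two]

end Cons

section PositiveDigits

variable {l l' : List ℤ} (hl : ∀ a ∈ l, 1 ≤ a)
include hl

lemma cfMatrix_one_zero_mem_Icc (hne : l ≠ []) :
    cfMatrix l 1 0 ∈ Set.Icc 1 (cfMatrix l 0 0) := by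
  induction l with
  | nil => exact absurd rfl hne
  | cons a t ih =>
    have ha : 1 ≤ a := hl a List.mem_cons_self
    rcases eq_or_ne t [] with rfl | ht
    · simpa using ha
    · obtain ⟨h1, h2⟩ := ih (fun b hb => hl b (List.mem_cons_of_mem a hb)) ht
      simp only [cfMatrix_cons_zero_zero, cfMatrix_cons_one_zero]
      constructor <;> nlinarith

lemma abs_cfMatrix_one_zero_sub_zero_one_lt :
    |cfMatrix l 1 0 - cfMatrix l 0 1| < cfMatrix l 0 0 := by
  rcases eq_or_ne l [] with rfl | hne
  · simp
  · have hrev : ∀ a ∈ l.reverse, 1 ≤ a := fun a ha => hl a (List.mem_reverse.mp ha)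
    obtain ⟨h1, h2⟩ := cfMatrix_one_zero_mem_Icc hl hne
    obtain ⟨h3, h4⟩ := cfMatrix_one_zero_mem_Icc hrev (List.reverse_ne_nil_iff.mpr hne)
    simp only [cfMatrix_reverse, transpose_apply] at h3 h4
    rw [abs_lt]
    constructor <;> linarith

lemma eq_of_cfMatrix_eq (hl' : ∀ a ∈ l', 1 ≤ a) (hlen : l.length = l'.length)
    (h : cfMatrix l = cfMatrix l') : l = l' := by
  induction l generalizing l' with
  | nil => exact (List.length_eq_zero_iff.mp hlen.symm).symm
  | cons a t ih =>
    obtain _ | ⟨a', t'⟩ := l'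
    · simp at hlen
    have ht : ∀ b ∈ t, 1 ≤ b := fun b hb => hl b (List.mem_cons_of_mem a hb)
    have ht' : ∀ b ∈ t', 1 ≤ b := fun b hb => hl' b (List.mem_cons_of_mem a' hb)
    have hlen' : t.length = t'.length := by simpa using hlen
    have e00 := congrFun₂ h 0 0
    have e01 := congrFun₂ h 0 1
    have e10 := congrFun₂ h 1 0
    have e11 := congrFun₂ h 1 1
    simp only [cfMatrix_cons_zero_zero, cfMatrix_cons_zero_one, cfMatrix_cons_one_zero,
      cfMatrix_cons_one_one] at e00 e01 e10 e11
    have haa : a = a' := by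
      rcases eq_or_ne t [] with rfl | hne
      · obtain rfl : t' = [] := List.length_eq_zero_iff.mp hlen'.symm
        simpa using e00
      -- both `cfMatrix t 1 0` and `cfMatrix t' 1 0` lie in `[1, cfMatrix t 0 0]`
      have hne' : t' ≠ [] := by rintro rfl; exact hne (List.length_eq_zero_iff.mp hlen')
      obtain ⟨h1, h2⟩ := cfMatrix_one_zero_mem_Icc ht hne
      obtain ⟨h1', h2'⟩ := cfMatrix_one_zero_mem_Icc ht' hne'
      rw [← e10] at e00 h2'
      rcases lt_trichotomy a a' with hlt | heq | hgt
      · nlinarith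
      · exact heq
      · nlinarith
    subst haa
    rw [e10] at e00
    rw [e11] at e01
    have e10' : cfMatrix t 1 0 = cfMatrix t' 1 0 := by linarith
    have e11' : cfMatrix t 1 1 = cfMatrix t' 1 1 := by linarith
    refine congrArg _ (ih ht ht' hlen' ?_)
    rw [eta_fin_two (cfMatrix t), eta_fin_two (cfMatrix t'), e10, e11, e10', e11']

end PositiveDigits

lemma reverse_map_range_eq_self_iff {α : Type*} (f : ℕ → α) (m : ℕ) :
    ((List.range m).map f).reverse = (List.range m).map f ↔ ∀ i < m, f (m - 1 - i) = f i := by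
  rw [← List.map_reverse, List.range_eq_range', List.reverse_range', List.map_map,
    ← List.range_eq_range', List.map_inj_left]
  simp

lemma reverse_map_range_succ_eq_self_iff {α : Type*} (c : ℕ → α) (m : ℕ) :
    ((List.range m).map fun i => c (i + 1)).reverse = (List.range m).map (fun i => c (i + 1)) ↔
      ∀ k, 1 ≤ k → k ≤ m → c k = c (m + 1 - k) := by
  rw [reverse_map_range_eq_self_iff]
  constructor
  · intro h k hk1 hkm
    have := h (k - 1) (by omega)
    rwa [show m - 1 - (k - 1) + 1 = m + 1 - k by omega, Nat.sub_add_cancel hk1, eq_comm] at this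
  · intro h i hi
    have := h (i + 1) (by omega) (by omega)
    rwa [show m + 1 - (i + 1) = m - 1 - i + 1 by omega, eq_comm] at this

lemma cfMatrix_one_zero_eq_zero_one_iff {l : List ℤ} (hl : ∀ a ∈ l, 1 ≤ a) :
    cfMatrix l 1 0 = cfMatrix l 0 1 ↔ l.reverse = l := by
  constructor
  · intro h
    refine eq_of_cfMatrix_eq (fun a ha => hl a (List.mem_reverse.mp ha)) hl List.length_reverse ?_
    rw [cfMatrix_reverse, eta_fin_two (cfMatrix l)ᵀ, eta_fin_two (cfMatrix l)]
    simp [h]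
  · intro h
    have := congrFun₂ (cfMatrix_reverse l) 0 1
    rwa [h, transpose_apply, eq_comm] at this

lemma cfMatrix_map_range {c p q : ℕ → ℤ} (hp0 : p 0 = 1) (hp1 : p 1 = 0) (hq0 : q 0 = 0)
    (hq1 : q 1 = 1) (hp : ∀ k, p (k + 2) = c (k + 1) * p (k + 1) + p k)
    (hq : ∀ k, q (k + 2) = c (k + 1) * q (k + 1) + q k) (m : ℕ) :
    cfMatrix ((List.range m).map fun i => c (i + 1)) = !![q (m + 1), q m; p (m + 1), p m] := by
  induction m with
  | zero => simp [hp0, hp1, hq0, hq1, one_fin_two]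
  | succ m ih =>
    rw [List.range_succ, List.map_append, List.map_singleton, cfMatrix_append_singleton, ih,
      mul_fin_two, hp, hq]
    simp only [mul_comm, mul_one, one_mul, mul_zero, add_zero]

lemma two_mul_mul_add_eq_zero_of_root {a b A B C : ℚ} {s : ℝ} (hs : Irrational s)
    (hsb : s ^ 2 = b) (h : A * (a + s) ^ 2 + B * (a + s) + C = 0) : 2 * A * a + B = 0 := by
  by_contra hne
  apply hs.ne_rat (-(A * (a ^ 2 + b) + B * a + C) / (2 * A * a + B))
  have hne' : ((2 * A * a + B : ℚ) : ℝ) ≠ 0 := by exact_mod_cast hne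
  push_cast at hne' ⊢
  rw [eq_div_iff hne']
  linear_combination h - A * hsb

lemma two_mul_mul_add_sub_eq_zero_of_fixedPoint {P P' Q Q' : ℤ} {a b : ℚ} {s x : ℝ}
    (hx0 : x ≠ 0) (hxirr : Irrational x) (hs : s ^ 2 = b) (hxas : x = a + s)
    (hrel : x = (P + P' * x) / (Q + Q' * x)) : 2 * (Q' : ℚ) * a + (Q - P' : ℚ) = 0 := by
  have hden : (Q : ℝ) + Q' * x ≠ 0 := by
    intro h0
    rw [h0, div_zero] at hrel
    exact hx0 hrel
  rw [eq_div_iff hden] at hrel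
  refine two_mul_mul_add_eq_zero_of_root (C := -P) (hxas ▸ hxirr).of_ratCast_add hs ?_
  push_cast
  rw [← hxas]
  linear_combination hrel

lemma exists_int_eq_iff_eq_neg {t : ℚ} {c d Q : ℤ} (h : (t + c) * Q = d) (hd : |d| < Q) :
    (∃ z : ℤ, t = z) ↔ t = -c := by
  refine ⟨fun ⟨z, hz⟩ => ?_, fun ht => ⟨-c, by simp [ht]⟩⟩
  subst hz
  have hzQ : (z + c) * Q = d := by exact_mod_cast h
  have hd0 : d = 0 := Int.eq_zero_of_abs_lt_dvd ⟨z + c, by rw [← hzQ, mul_comm]⟩ hd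
  have hQ : Q ≠ 0 := by rintro rfl; linarith [abs_nonneg d]
  rw [hd0, mul_eq_zero, or_iff_left hQ] at hzQ
  simp [eq_neg_of_add_eq_zero_left hzQ]

theorem stmt_11_general (n : ℕ) (hn : 1 ≤ n) (c p q : ℕ → ℤ)
    (hc : ∀ k, 1 ≤ k → 1 ≤ c k)
    (hp0 : p 0 = 1) (hp1 : p 1 = 0)
    (hq0 : q 0 = 0) (hq1 : q 1 = 1)
    (hp : ∀ k, p (k + 2) = c (k + 1) * p (k + 1) + p k)
    (hq : ∀ k, q (k + 2) = c (k + 1) * q (k + 1) + q k)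
    (x : ℝ) (hx0 : 0 < x) (hxirr : Irrational x)
    (hrel : x = ((p (n + 1) : ℝ) + (p n : ℝ) * x) / ((q (n + 1) : ℝ) + (q n : ℝ) * x))
    (a b : ℚ)
    (s : ℝ) (hs : s ^ 2 = (b : ℝ)) (hxas : x = (a : ℝ) + s) :
    ((∃ m : ℤ, 2 * a = (m : ℚ)) ↔ 2 * a = -(c n : ℚ)) ∧
      ((∃ m : ℤ, 2 * a = (m : ℚ)) ↔ ∀ k, 1 ≤ k → k ≤ n - 1 → c k = c (n - k)) := by
  obtain ⟨m, rfl⟩ : ∃ m, n = m + 1 := ⟨n - 1, by omega⟩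
  let w := (List.range m).map fun i => c (i + 1)
  have hw : ∀ d ∈ w, 1 ≤ d := by
    simp only [w, List.mem_map, List.mem_range]
    rintro _ ⟨i, -, rfl⟩
    exact hc _ i.succ_pos
  have hM : cfMatrix w = _ := cfMatrix_map_range hp0 hp1 hq0 hq1 hp hq m
  have hcoef := two_mul_mul_add_sub_eq_zero_of_fixedPoint hx0.ne' hxirr hs hxas hrel
  have hkey : (2 * a + c (m + 1)) * q (m + 1) = ((p (m + 1) - q m : ℤ) : ℚ) := by
    rw [hq] at hcoef
    push_cast at hcoef ⊢
    linear_combination hcoef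
  have hbound : |p (m + 1) - q m| < q (m + 1) := by
    simpa [hM] using abs_cfMatrix_one_zero_sub_zero_one_lt hw
  have hint := exists_int_eq_iff_eq_neg hkey hbound
  have hQ : (q (m + 1) : ℚ) ≠ 0 := by exact_mod_cast ((abs_nonneg _).trans_lt hbound).ne'
  have hsymm : 2 * a = -(c (m + 1) : ℚ) ↔ w.reverse = w := by
    rw [← cfMatrix_one_zero_eq_zero_one_iff hw, hM, ← add_eq_zero_iff_eq_neg,
      ← mul_left_inj' hQ, zero_mul, hkey]
    simp [sub_eq_zero]
  refine ⟨hint, hint.trans (hsymm.trans ?_)⟩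
  simpa using reverse_map_range_succ_eq_self_iff c m

/-- For `x = [0; \overline{c₁,…,cₙ}]` with rational part `a` (convergents with index
`k+1` = subscript `k`), the following are equivalent: (a) `2a ∈ ℤ`; (b) `2a = -cₙ`;
(c) the sequence `c₁,…,cₙ₋₁` is symmetric. -/
theorem stmt_11 (n : ℕ) (hn : 1 ≤ n) (c p q : ℕ → ℤ)
    (hc0 : c 0 = 0) (hc : ∀ k, 1 ≤ k → 1 ≤ c k)
    (hp0 : p 0 = 1) (hp1 : p 1 = 0)
    (hq0 : q 0 = 0) (hq1 : q 1 = 1)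
    (hp : ∀ k, p (k + 2) = c (k + 1) * p (k + 1) + p k)
    (hq : ∀ k, q (k + 2) = c (k + 1) * q (k + 1) + q k)
    (x : ℝ) (hx0 : 0 < x) (hx1 : x < 1) (hxirr : Irrational x)
    (hrel : x = ((p (n + 1) : ℝ) + (p n : ℝ) * x) / ((q (n + 1) : ℝ) + (q n : ℝ) * x))
    (a b : ℚ) (hb : 0 < b) (hbns : ¬ ∃ r : ℚ, r ^ 2 = b)
    (s : ℝ) (hs : s ^ 2 = (b : ℝ)) (hxas : x = (a : ℝ) + s) :
    ((∃ m : ℤ, 2 * a = (m : ℚ)) ↔ 2 * a = -(c n : ℚ)) ∧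
      ((∃ m : ℤ, 2 * a = (m : ℚ)) ↔ ∀ k, 1 ≤ k → k ≤ n - 1 → c k = c (n - k)) :=
  stmt_11_general n hn c p q hc hp0 hp1 hq0 hq1 hp hq x hx0 hxirr hrel a b s hs hxas
end
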